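/- arXiv:cs/0701183 — 4 statements merged into one kernel-verified Lean document; each statement's English description precedes it below -/
import Mathlib

section
/- Let W ∈ ℝ^{n×n} with ‖I − W‖_∞ < 1. Then componentwise |W^{-1}| ≤ |2I − W| + M(‖I − W‖_∞² / (1 − ‖I − W‖_∞)), where M(x) denotes the n×n matrix whose entries are all equal to x. -/
open Matrix
open scoped NNReal

/-- The infinity (max row sum) norm of a real square matrix. -/
noncomputable def infNorm {n : ℕ} (A : Matrix (Fin n) (Fin n) ℝ) : ℝ :=
  ⨆ i, ∑ j, |A i j|

attribute [local instance] Matrix.linftyOpNormedAddCommGroup Matrix.linftyOpNormedRing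

noncomputable local instance {n : ℕ} :
    @CompleteSpace (Matrix (Fin n) (Fin n) ℝ) PseudoMetricSpace.toUniformSpace :=
  by exact @Matrix.instCompleteSpace (Fin n) (Fin n) ℝ _ _

lemma infNorm_eq_norm {n : ℕ} (A : Matrix (Fin n) (Fin n) ℝ) : infNorm A = ‖A‖ := by
  rcases Nat.eq_zero_or_pos n with hn | hn
  · subst hn
    simp [infNorm, Matrix.linfty_opNorm_def]
  · have hne : Nonempty (Fin n) := ⟨⟨0, hn⟩⟩
    rw [Matrix.linfty_opNorm_def, infNorm,
      ← Finset.sup'_eq_sup Finset.univ_nonempty (fun i => ∑ j, ‖A i j‖₊),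
      Finset.comp_sup'_eq_sup'_comp Finset.univ_nonempty ((↑) : ℝ≥0 → ℝ)
        (fun x y => NNReal.coe_max x y),
      Finset.sup'_univ_eq_ciSup]
    congr 1
    funext i
    -- cast handled by simp
    simp [Real.norm_eq_abs]

lemma entry_abs_le_norm {n : ℕ} (A : Matrix (Fin n) (Fin n) ℝ) (i j : Fin n) :
    |A i j| ≤ ‖A‖ := by
  rw [Matrix.linfty_opNorm_def]
  calc |A i j| = ((‖A i j‖₊ : ℝ≥0) : ℝ) := by simp [Real.norm_eq_abs]
    _ ≤ ((∑ k, ‖A i k‖₊ : ℝ≥0) : ℝ) := by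
        exact_mod_cast Finset.single_le_sum (f := fun k => ‖A i k‖₊)
          (fun k _ => zero_le) (Finset.mem_univ j)
    _ ≤ _ := by
        exact_mod_cast Finset.le_sup (f := fun i => ∑ k, ‖A i k‖₊) (Finset.mem_univ i)

theorem stmt_7 {n : ℕ} (W : Matrix (Fin n) (Fin n) ℝ) (h : infNorm (1 - W) < 1) :
    ∀ i j, |W⁻¹ i j| ≤ |(2 - W) i j| + (infNorm (1 - W)) ^ 2 / (1 - infNorm (1 - W)) := by
  intro i j
  set E : Matrix (Fin n) (Fin n) ℝ := 1 - W with hE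
  have hE1 : ‖E‖ < 1 := by rw [← infNorm_eq_norm]; exact h
  have hE0 : (0 : ℝ) ≤ ‖E‖ := norm_nonneg _
  have hsum : Summable fun k : ℕ => E ^ k := summable_geometric_of_norm_lt_one hE1
  have hinv : W⁻¹ = ∑' k : ℕ, E ^ k := by
    rw [Matrix.nonsing_inv_eq_ringInverse]
    have hW : W = 1 - E := by rw [hE, sub_sub_cancel]
    rw [hW, NormedRing.inverse_one_sub E hE1]
    rfl
  have hsum1 : Summable fun k : ℕ => E ^ (k + 1) := by
    simpa using (summable_nat_add_iff 1).mpr hsum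
  have hsplit : (∑' k : ℕ, E ^ k) = 1 + E + ∑' k : ℕ, E ^ (k + 2) := by
    rw [Summable.tsum_eq_zero_add hsum, Summable.tsum_eq_zero_add hsum1]
    simp [add_assoc]
  set T : Matrix (Fin n) (Fin n) ℝ := ∑' k : ℕ, E ^ (k + 2) with hT
  have hTnorm : ‖T‖ ≤ ‖E‖ ^ 2 / (1 - ‖E‖) := by
    have hb : ∀ k : ℕ, ‖E ^ (k + 2)‖ ≤ ‖E‖ ^ 2 * ‖E‖ ^ k := by
      intro k
      calc ‖E ^ (k + 2)‖ ≤ ‖E‖ ^ (k + 2) := norm_pow_le' E (Nat.succ_pos _)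
        _ = ‖E‖ ^ 2 * ‖E‖ ^ k := by ring
    have hsumnorm : Summable fun k : ℕ => ‖E‖ ^ 2 * ‖E‖ ^ k :=
      (summable_geometric_of_lt_one hE0 hE1).mul_left _
    calc ‖T‖ ≤ ∑' k : ℕ, ‖E‖ ^ 2 * ‖E‖ ^ k := tsum_of_norm_bounded hsumnorm.hasSum hb
      _ = ‖E‖ ^ 2 * (1 - ‖E‖)⁻¹ := by
          rw [tsum_mul_left, tsum_geometric_of_lt_one hE0 hE1]
      _ = ‖E‖ ^ 2 / (1 - ‖E‖) := by rw [div_eq_mul_inv]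
  have h2W : (2 : Matrix (Fin n) (Fin n) ℝ) - W = 1 + E := by rw [hE, ← add_sub_assoc, one_add_one_eq_two]
  have key : W⁻¹ i j = (2 - W) i j + T i j := by
    rw [hinv, hsplit, h2W, Matrix.add_apply]
  rw [key, infNorm_eq_norm]
  calc |(2 - W) i j + T i j| ≤ |(2 - W) i j| + |T i j| := abs_add_le _ _
    _ ≤ |(2 - W) i j| + ‖E‖ ^ 2 / (1 - ‖E‖) :=
        add_le_add_right (le_trans (entry_abs_le_norm T i j) hTnorm) _
end

section
/- Let B, B̃ ∈ ℝ^{n×n} be symmetric positive definite with Cholesky factors R and R̃ (upper triangular with positive diagonal, B = RᵀR, B̃ = R̃ᵀR̃). Let E = B̃ − B and G = |R̃^{-T} E R̃^{-1}|. If ρ(G) < 1 then componentwise |R̃ − R| ≤ triu(G(I−G)^{-1})·|R̃|. -/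
open Matrix

/-- Entrywise absolute value of a matrix. -/
def matAbs {n : ℕ} (A : Matrix (Fin n) (Fin n) ℝ) : Matrix (Fin n) (Fin n) ℝ :=
  Matrix.of fun i j => |A i j|

/-- Upper triangular part of a matrix. -/
def triu {n : ℕ} (A : Matrix (Fin n) (Fin n) ℝ) : Matrix (Fin n) (Fin n) ℝ :=
  Matrix.of fun i j => if i ≤ j then A i j else 0

-- eigenvalue transfer: real eigen-equation implies bound via complex hypothesis
lemma eig_bound {n : ℕ} (G : Matrix (Fin n) (Fin n) ℝ)
    (hρ : ∀ μ : ℂ, Module.End.HasEigenvalue (Matrix.toLin' (G.map Complex.ofReal)) μ → ‖μ‖ < 1)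
    (μ : ℝ) (v : Fin n → ℝ) (hv : v ≠ 0) (heq : G *ᵥ v = μ • v) : |μ| < 1 := by
  have h1 : (G.map Complex.ofReal) *ᵥ (fun k => (v k : ℂ)) = (μ : ℂ) • (fun k => (v k : ℂ)) := by
    funext k
    have := congrFun heq k
    simp only [Matrix.mulVec, dotProduct, Pi.smul_apply, smul_eq_mul] at this ⊢
    simp only [Matrix.map_apply]
    push_cast
    exact_mod_cast congrArg (fun x : ℝ => (x : ℂ)) this
  have hvc : (fun k => (v k : ℂ)) ≠ 0 := by
    intro h
    apply hv
    funext k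
    have := congrFun h k
    simpa using this
  have : Module.End.HasEigenvalue (Matrix.toLin' (G.map Complex.ofReal)) (μ : ℂ) := by
    apply Module.End.hasEigenvalue_of_hasEigenvector (x := fun k => (v k : ℂ))
    constructor
    · rw [Module.End.mem_eigenspace_iff, Matrix.toLin'_apply]
      exact h1
    · exact hvc
  have := hρ _ this
  simpa using this

lemma pow_entry_nonneg {n : ℕ} (G : Matrix (Fin n) (Fin n) ℝ) (hG : ∀ i j, 0 ≤ G i j) :
    ∀ m i j, 0 ≤ (G ^ m) i j := by
  intro m
  induction m with
  | zero => intro i j; simp [Matrix.one_apply]; positivity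
  | succ m ih =>
    intro i j
    rw [pow_succ, Matrix.mul_apply]
    exact Finset.sum_nonneg fun k _ => mul_nonneg (ih i k) (hG k j)

lemma neumann {n : ℕ} (G : Matrix (Fin n) (Fin n) ℝ) (hGsym : Gᵀ = G) (hG0 : ∀ i j, 0 ≤ G i j)
    (hρ : ∀ μ : ℂ, Module.End.HasEigenvalue (Matrix.toLin' (G.map Complex.ofReal)) μ → ‖μ‖ < 1)
    (hn : 0 < n) :
    (1 - G) * (1 - G)⁻¹ = 1 ∧ (1 - G)⁻¹ * (1 - G) = 1 ∧ ∀ i j, 0 ≤ (1 - G)⁻¹ i j := by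
  -- hermitian
  have hH : G.IsHermitian := by
    rw [Matrix.IsHermitian]
    ext i j
    simp only [Matrix.conjTranspose_apply, star_trivial]
    exact congrFun (congrFun hGsym i) j ▸ rfl
  -- eigenvalue bounds
  have heig : ∀ i, |hH.eigenvalues i| < 1 := by
    intro i
    apply eig_bound G hρ _ _ _ (hH.mulVec_eigenvectorBasis i)
    have := (hH.eigenvectorBasis).toBasis.ne_zero i
    simpa using this
  -- nondegeneracy of 1 - G
  have hdet : (1 - G).det ≠ 0 := by
    intro hd
    obtain ⟨v, hv0, hv⟩ := (Matrix.exists_mulVec_eq_zero_iff).2 hd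
    have : G *ᵥ v = (1:ℝ) • v := by
      have := hv
      rw [Matrix.sub_mulVec, Matrix.one_mulVec, sub_eq_zero] at this
      rw [one_smul]; exact this.symm
    have := eig_bound G hρ 1 v hv0 this
    simp at this
  have hunit : IsUnit (1 - G) := (Matrix.isUnit_iff_isUnit_det _).2 (isUnit_iff_ne_zero.2 hdet)
  refine ⟨Matrix.mul_nonsing_inv _ (isUnit_iff_ne_zero.2 hdet),
    Matrix.nonsing_inv_mul _ (isUnit_iff_ne_zero.2 hdet), ?_⟩
  set N := (1 - G)⁻¹ with hN
  have hGN : G * N = N - 1 := by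
    have h := Matrix.mul_nonsing_inv (1 - G) (isUnit_iff_ne_zero.2 hdet)
    rw [Matrix.sub_mul, Matrix.one_mul] at h
    linear_combination (norm := abel) -h
  -- partial sums identity
  have hpart : ∀ m : ℕ, N = (∑ l ∈ Finset.range m, G ^ l) + G ^ m * N := by
    intro m
    induction m with
    | zero => simp
    | succ m ih =>
      have h2 : G ^ (m+1) * N = G ^ m * N - G ^ m := by
        rw [pow_succ, Matrix.mul_assoc, hGN, Matrix.mul_sub, Matrix.mul_one]
      rw [Finset.sum_range_succ, h2]
      conv_lhs => rw [ih]
      abel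
  -- spectral decomposition and power decay
  set U : Matrix (Fin n) (Fin n) ℝ := (hH.eigenvectorUnitary : Matrix (Fin n) (Fin n) ℝ) with hU
  set d : Fin n → ℝ := hH.eigenvalues with hd'
  have hspec : G = U * Matrix.diagonal (RCLike.ofReal ∘ d) * star U := hH.spectral_theorem
  have hUstar : U * star U = 1 := (Matrix.mem_unitaryGroup_iff).mp hH.eigenvectorUnitary.2
  have hstarU : star U * U = 1 := (Matrix.mem_unitaryGroup_iff').mp hH.eigenvectorUnitary.2
  have hpow : ∀ m, G ^ m = U * (Matrix.diagonal (RCLike.ofReal ∘ d)) ^ m * star U := by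
    intro m
    induction m with
    | zero => simpa using hUstar.symm
    | succ m ih =>
      rw [pow_succ, ih, hspec, pow_succ]
      simp only [Matrix.mul_assoc]
      rw [← Matrix.mul_assoc (star U) U, hstarU, Matrix.one_mul]
  -- spectral radius
  have hne : (Finset.univ : Finset (Fin n)).Nonempty := Finset.univ_nonempty_iff.2 (Fin.pos_iff_nonempty.1 hn)
  set ρ : ℝ := Finset.univ.sup' hne (fun l => |d l|) with hρdef
  have l0 : Fin n := ⟨0, hn⟩
  have hρ0 : 0 ≤ ρ := le_trans (abs_nonneg (d l0)) (Finset.le_sup' (fun l => |d l|) (Finset.mem_univ l0))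
  have hρ1 : ρ < 1 := (Finset.sup'_lt_iff hne).2 fun l _ => heig l
  have hDm : ∀ (m : ℕ) (i l : Fin n), (U * (Matrix.diagonal ((RCLike.ofReal ∘ d) : Fin n → ℝ)) ^ m) i l = U i l * d l ^ m := by
    intro m i l
    rw [Matrix.diagonal_pow, Matrix.mul_apply, Finset.sum_eq_single l]
    · simp
    · intro k _ hk
      simp [Matrix.diagonal_apply_ne _ hk]
    · simp
  have hentry : ∀ m i j, |(G ^ m) i j| ≤ (∑ l, |U i l| * |U j l|) * ρ ^ m := by
    intro m i j
    have h1 : (G ^ m) i j = ∑ l, U i l * d l ^ m * U j l := by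
      rw [hpow, Matrix.mul_apply]
      refine Finset.sum_congr rfl fun l _ => ?_
      rw [hDm]
      simp [Matrix.star_apply]
    rw [h1]
    rw [Finset.sum_mul]
    refine le_trans (Finset.abs_sum_le_sum_abs _ _) (Finset.sum_le_sum fun l _ => ?_)
    rw [abs_mul, abs_mul, abs_pow]
    have h2 : |d l| ^ m ≤ ρ ^ m :=
      pow_le_pow_left₀ (abs_nonneg _) (Finset.le_sup' (fun l => |d l|) (Finset.mem_univ l)) m
    calc |U i l| * |d l| ^ m * |U j l| ≤ |U i l| * ρ ^ m * |U j l| :=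
          mul_le_mul_of_nonneg_right (mul_le_mul_of_nonneg_left h2 (abs_nonneg _)) (abs_nonneg _)
      _ = |U i l| * |U j l| * ρ ^ m := by ring
  -- entrywise nonneg of N
  intro i j
  have hpm : ∀ m, 0 ≤ (∑ l ∈ Finset.range m, G ^ l) i j := by
    intro m
    rw [Matrix.sum_apply]
    exact Finset.sum_nonneg fun l _ => pow_entry_nonneg G hG0 l i j
  have hr : Filter.Tendsto (fun m => (G ^ m * N) i j) Filter.atTop (nhds 0) := by
    have hb : ∀ m, |(G ^ m * N) i j| ≤ (∑ k, (∑ l, |U i l| * |U k l|) * |N k j|) * ρ ^ m := by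
      intro m
      rw [Matrix.mul_apply]
      calc |∑ k, (G ^ m) i k * N k j| ≤ ∑ k, |(G ^ m) i k| * |N k j| := by
            refine le_trans (Finset.abs_sum_le_sum_abs _ _) ?_
            apply Finset.sum_le_sum; intro k _; rw [abs_mul]
        _ ≤ ∑ k, ((∑ l, |U i l| * |U k l|) * ρ ^ m) * |N k j| := by
            apply Finset.sum_le_sum; intro k _
            exact mul_le_mul_of_nonneg_right (hentry m i k) (abs_nonneg _)
        _ = (∑ k, (∑ l, |U i l| * |U k l|) * |N k j|) * ρ ^ m := by
            rw [Finset.sum_mul]; congr 1; funext k; ring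
    apply squeeze_zero_norm hb
    rw [show (0:ℝ) = (∑ k, (∑ l, |U i l| * |U k l|) * |N k j|) * 0 by ring]
    exact (tendsto_pow_atTop_nhds_zero_of_lt_one hρ0 hρ1).const_mul _
  have : Filter.Tendsto (fun m => (∑ l ∈ Finset.range m, G ^ l) i j) Filter.atTop (nhds (N i j)) := by
    have : (fun m => (∑ l ∈ Finset.range m, G ^ l) i j) = fun m => N i j - (G ^ m * N) i j := by
      funext m
      have := congrFun (congrFun (hpart m) i) j
      rw [Matrix.add_apply] at this
      linarith
    rw [this]
    simpa using (tendsto_const_nhds.sub hr)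
  exact ge_of_tendsto' this hpm

lemma key : ∀ (n : ℕ) (F G W N : Matrix (Fin n) (Fin n) ℝ),
    Fᵀ = F →
    (∀ i j, |F i j| ≤ G i j) →
    ((1 - G) * N = 1) → (N * (1 - G) = 1) → (∀ i j, 0 ≤ N i j) →
    (∀ i j, j < i → W i j = 0) → (∀ i, 0 < W i i) →
    (Wᵀ * W = 1 - F) →
    ∀ i j, |(if i = j then (1:ℝ) else 0) - W i j| ≤
      (if i ≤ j then N i j - (if i = j then (1:ℝ) else 0) else 0) := by
  intro n
  induction n with
  | zero => intro _ _ _ _ _ _ _ _ _ _ _ _ i; exact i.elim0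
  | succ n ih =>
    intro F G W N hFsym hFG hN1 hN2 hN0 hWtri hWdiag hWW
    have hFs : ∀ i j, F j i = F i j := fun i j => by
      have := congrFun (congrFun hFsym i) j; simpa [Matrix.transpose_apply] using this
    have hG0 : ∀ i j, 0 ≤ G i j := fun i j => le_trans (abs_nonneg _) (hFG i j)
    -- scalar consequences of inverse equations
    have hGN : ∀ i j, ∑ k, G i k * N k j = N i j - (if i = j then (1:ℝ) else 0) := by
      intro i j
      have h := congrFun (congrFun hN1 i) j
      simp only [Matrix.mul_apply, Matrix.sub_apply, Matrix.one_apply, sub_mul, ite_mul,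
        one_mul, zero_mul] at h
      rw [Finset.sum_sub_distrib, Finset.sum_ite_eq] at h
      simp only [Finset.mem_univ, if_true] at h
      linarith
    have hNG : ∀ i j, ∑ k, N i k * G k j = N i j - (if i = j then (1:ℝ) else 0) := by
      intro i j
      have h := congrFun (congrFun hN2 i) j
      simp only [Matrix.mul_apply, Matrix.sub_apply, Matrix.one_apply, mul_sub, mul_ite,
        mul_one, mul_zero] at h
      rw [Finset.sum_sub_distrib, Finset.sum_ite_eq'] at h
      simp only [Finset.mem_univ, if_true] at h
      linarith
    have hWWe : ∀ i j, ∑ k, W k i * W k j = (if i = j then (1:ℝ) else 0) - F i j := by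
      intro i j
      have h := congrFun (congrFun hWW i) j
      simpa [Matrix.mul_apply, Matrix.transpose_apply, Matrix.sub_apply, Matrix.one_apply] using h
    set a : ℝ := F 0 0 with ha
    set α : ℝ := 1 - G 0 0 with hα
    set w0 : ℝ := W 0 0 with hw0def
    have hw0 : 0 < w0 := hWdiag 0
    have hWcol : ∀ k : Fin n, W k.succ 0 = 0 := fun k => hWtri _ _ (Fin.succ_pos k)
    have hw0sq : w0 * w0 = 1 - a := by
      have h := hWWe 0 0
      rw [Fin.sum_univ_succ] at h
      have hz : ∀ k : Fin n, W k.succ 0 * W k.succ 0 = 0 := fun k => by rw [hWcol k]; ring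
      rw [Finset.sum_congr rfl (fun k _ => hz k), Finset.sum_const_zero] at h
      simpa using h
    have h1a : 0 < 1 - a := by nlinarith
    have hw0ne : w0 ≠ 0 := ne_of_gt hw0
    have hWrow : ∀ j : Fin n, W 0 j.succ = -F 0 j.succ / w0 := by
      intro j
      have h := hWWe 0 j.succ
      rw [Fin.sum_univ_succ] at h
      have hz : ∀ k : Fin n, W k.succ 0 * W k.succ j.succ = 0 := fun k => by rw [hWcol k]; ring
      rw [Finset.sum_congr rfl (fun k _ => hz k), Finset.sum_const_zero] at h
      rw [if_neg (Ne.symm (Fin.succ_ne_zero j))] at h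
      field_simp
      linarith
    -- diagonal facts
    have hN00 : 1 ≤ N 0 0 := by
      have h := hGN 0 0
      rw [if_pos rfl] at h
      have : 0 ≤ ∑ k, G 0 k * N k 0 :=
        Finset.sum_nonneg fun k _ => mul_nonneg (hG0 0 k) (hN0 k 0)
      linarith
    have hN00α : 1 ≤ N 0 0 * α := by
      have h := hNG 0 0
      rw [if_pos rfl, Fin.sum_univ_succ] at h
      have : 0 ≤ ∑ k : Fin n, N 0 k.succ * G k.succ 0 :=
        Finset.sum_nonneg fun k _ => mul_nonneg (hN0 0 k.succ) (hG0 k.succ 0)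
      have hexp : N 0 0 * α = 1 + ∑ k : Fin n, N 0 k.succ * G k.succ 0 := by
        rw [hα]; ring_nf; linarith [h]
      linarith
    have hα_pos : 0 < α := by nlinarith [hN00, hN00α]
    have hα1 : α ≤ 1 := by have := hG0 0 0; rw [hα]; linarith
    have haG : |a| ≤ G 0 0 := hFG 0 0
    have hαa : α ≤ 1 - a := by
      have : a ≤ G 0 0 := le_trans (le_abs_self a) haG
      rw [hα]; linarith
    have hαw0 : α ≤ w0 := by nlinarith [hw0sq, hα_pos, hw0, hα1, hαa]
    -- submatrices
    set F' : Matrix (Fin n) (Fin n) ℝ :=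
      Matrix.of (fun i j => F i.succ j.succ + F 0 i.succ * F 0 j.succ / (1 - a)) with hF'
    set G' : Matrix (Fin n) (Fin n) ℝ :=
      Matrix.of (fun i j => G i.succ j.succ + G i.succ 0 * G 0 j.succ / α) with hG'
    set W1 : Matrix (Fin n) (Fin n) ℝ := W.submatrix Fin.succ Fin.succ with hW1
    set N1 : Matrix (Fin n) (Fin n) ℝ := N.submatrix Fin.succ Fin.succ with hN1'
    -- IH hypotheses
    have hF'sym : F'ᵀ = F' := by
      ext i j
      simp only [Matrix.transpose_apply, hF', Matrix.of_apply]
      rw [hFs j.succ i.succ, hFs j.succ 0, hFs i.succ 0]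
      rw [hFs 0 i.succ, hFs 0 j.succ]
      ring
    have hF'G' : ∀ i j, |F' i j| ≤ G' i j := by
      intro i j
      simp only [hF', hG', Matrix.of_apply]
      have h1 : |F i.succ j.succ| ≤ G i.succ j.succ := hFG i.succ j.succ
      have h2 : |F 0 i.succ| ≤ G i.succ 0 := by rw [← hFs 0 i.succ]; exact hFG i.succ 0
      have h3 : |F 0 j.succ| ≤ G 0 j.succ := hFG 0 j.succ
      have h4 : |F 0 i.succ * F 0 j.succ| / (1 - a) ≤ G i.succ 0 * G 0 j.succ / α := by
        apply div_le_div₀ (mul_nonneg (hG0 i.succ 0) (hG0 0 j.succ)) _ hα_pos hαa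
        rw [abs_mul]
        exact mul_le_mul h2 h3 (abs_nonneg _) (hG0 i.succ 0)
      calc |F i.succ j.succ + F 0 i.succ * F 0 j.succ / (1 - a)|
          ≤ |F i.succ j.succ| + |F 0 i.succ * F 0 j.succ / (1 - a)| := abs_add_le _ _
        _ = |F i.succ j.succ| + |F 0 i.succ * F 0 j.succ| / (1 - a) := by
            rw [abs_div, abs_of_pos h1a]
        _ ≤ G i.succ j.succ + G i.succ 0 * G 0 j.succ / α := add_le_add h1 h4
    have hrow : ∀ j : Fin n, ∑ k : Fin n, G 0 k.succ * N k.succ j.succ = α * N 0 j.succ := by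
      intro j
      have h := hGN 0 j.succ
      rw [Fin.sum_univ_succ, if_neg (Ne.symm (Fin.succ_ne_zero j))] at h
      rw [hα]; ring_nf; ring_nf at h; linarith
    have hcol : ∀ i : Fin n, ∑ k : Fin n, N i.succ k.succ * G k.succ 0 = α * N i.succ 0 := by
      intro i
      have h := hNG i.succ 0
      rw [Fin.sum_univ_succ, if_neg (Fin.succ_ne_zero i)] at h
      rw [hα]; ring_nf; ring_nf at h; linarith
    have hN1a : (1 - G') * N1 = 1 := by
      ext i j
      rw [Matrix.mul_apply]
      simp only [Matrix.sub_apply, Matrix.one_apply, sub_mul, ite_mul, one_mul, zero_mul,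
        hG', hN1', Matrix.of_apply, Matrix.submatrix_apply]
      rw [Finset.sum_sub_distrib, Finset.sum_ite_eq]
      simp only [Finset.mem_univ, if_true]
      have hsplit : ∑ k : Fin n, (G i.succ k.succ + G i.succ 0 * G 0 k.succ / α) * N k.succ j.succ
          = (∑ k : Fin n, G i.succ k.succ * N k.succ j.succ)
            + (G i.succ 0 / α) * (∑ k : Fin n, G 0 k.succ * N k.succ j.succ) := by
        rw [Finset.mul_sum, ← Finset.sum_add_distrib]
        exact Finset.sum_congr rfl fun k _ => by ring
      rw [hsplit, hrow j]
      have h := hGN i.succ j.succ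
      rw [Fin.sum_univ_succ] at h
      have hc : (G i.succ 0 / α) * (α * N 0 j.succ) = G i.succ 0 * N 0 j.succ := by
        field_simp
      rw [hc]
      have hifs : (if i.succ = j.succ then (1:ℝ) else 0) = (if i = j then (1:ℝ) else 0) := by
        simp [Fin.succ_inj]
      rw [hifs] at h
      linarith
    have hN1b : N1 * (1 - G') = 1 := by
      ext i j
      rw [Matrix.mul_apply]
      simp only [Matrix.sub_apply, Matrix.one_apply, mul_sub, mul_ite, mul_one, mul_zero,
        hG', hN1', Matrix.of_apply, Matrix.submatrix_apply]
      rw [Finset.sum_sub_distrib, Finset.sum_ite_eq']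
      simp only [Finset.mem_univ, if_true]
      have hsplit : ∑ k : Fin n, N i.succ k.succ * (G k.succ j.succ + G k.succ 0 * G 0 j.succ / α)
          = (∑ k : Fin n, N i.succ k.succ * G k.succ j.succ)
            + (∑ k : Fin n, N i.succ k.succ * G k.succ 0) * (G 0 j.succ / α) := by
        rw [Finset.sum_mul, ← Finset.sum_add_distrib]
        exact Finset.sum_congr rfl fun k _ => by ring
      rw [hsplit, hcol i]
      have h := hNG i.succ j.succ
      rw [Fin.sum_univ_succ] at h
      have hc : (α * N i.succ 0) * (G 0 j.succ / α) = N i.succ 0 * G 0 j.succ := by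
        field_simp
      rw [hc]
      have hifs : (if i.succ = j.succ then (1:ℝ) else 0) = (if i = j then (1:ℝ) else 0) := by
        simp [Fin.succ_inj]
      rw [hifs] at h
      linarith
    have hN1pos : ∀ i j : Fin n, 0 ≤ N1 i j := fun i j => hN0 i.succ j.succ
    have hW1tri : ∀ i j : Fin n, j < i → W1 i j = 0 := fun i j h =>
      hWtri i.succ j.succ (Fin.succ_lt_succ_iff.mpr h)
    have hW1diag : ∀ i : Fin n, 0 < W1 i i := fun i => hWdiag i.succ
    have hWW1 : W1ᵀ * W1 = 1 - F' := by
      ext i j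
      rw [Matrix.mul_apply]
      simp only [Matrix.transpose_apply, Matrix.sub_apply, Matrix.one_apply, hW1, hF',
        Matrix.of_apply, Matrix.submatrix_apply]
      have h := hWWe i.succ j.succ
      rw [Fin.sum_univ_succ] at h
      have hifs : (if i.succ = j.succ then (1:ℝ) else 0) = (if i = j then (1:ℝ) else 0) := by
        simp [Fin.succ_inj]
      rw [hifs] at h
      have hprod : W 0 i.succ * W 0 j.succ = F 0 i.succ * F 0 j.succ / (1 - a) := by
        rw [hWrow i, hWrow j, ← hw0sq]
        field_simp
      rw [hprod] at h
      linarith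
    have key' := ih F' G' W1 N1 hF'sym hF'G' hN1a hN1b hN1pos hW1tri hW1diag hWW1
    -- conclusion
    intro i j
    rcases Fin.eq_zero_or_eq_succ i with rfl | ⟨i', rfl⟩
    · rcases Fin.eq_zero_or_eq_succ j with rfl | ⟨j', rfl⟩
      · -- (0,0)
        rw [if_pos rfl, if_pos (le_refl _)]
        have hbound : G 0 0 ≤ N 0 0 - 1 := by
          have h := hGN 0 0
          rw [if_pos rfl, Fin.sum_univ_succ] at h
          have h2 : 0 ≤ ∑ k : Fin n, G 0 k.succ * N k.succ 0 :=
            Finset.sum_nonneg fun k _ => mul_nonneg (hG0 0 k.succ) (hN0 k.succ 0)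
          nlinarith [hG0 0 0, hN00]
        have habs : |1 - w0| ≤ |a| := by
          calc |1 - w0| ≤ |1 - w0| * (1 + w0) :=
                le_mul_of_one_le_right (abs_nonneg _) (by linarith)
            _ = |(1 - w0) * (1 + w0)| := by
                rw [abs_mul, abs_of_pos (show (0:ℝ) < 1 + w0 by linarith)]
            _ = |a| := by rw [show (1 - w0) * (1 + w0) = a by nlinarith [hw0sq]]
        calc |1 - W 0 0| = |1 - w0| := rfl
          _ ≤ |a| := habs
          _ ≤ G 0 0 := haG
          _ ≤ N 0 0 - 1 := hbound
      · -- (0, j'+1)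
        rw [if_neg (Ne.symm (Fin.succ_ne_zero j')), if_pos (Fin.zero_le _)]
        rw [zero_sub, abs_neg, sub_zero, hWrow j']
        rw [abs_div, abs_of_pos hw0, abs_neg]
        rw [div_le_iff₀ hw0]
        have hb : N 0 0 * G 0 j'.succ ≤ N 0 j'.succ := by
          have h := hNG 0 j'.succ
          rw [if_neg (Ne.symm (Fin.succ_ne_zero j')), Fin.sum_univ_succ] at h
          have h2 : 0 ≤ ∑ k : Fin n, N 0 k.succ * G k.succ j'.succ :=
            Finset.sum_nonneg fun k _ => mul_nonneg (hN0 0 k.succ) (hG0 k.succ j'.succ)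
          linarith
        have hf : |F 0 j'.succ| ≤ G 0 j'.succ := hFG 0 j'.succ
        have hN0j : 0 ≤ N 0 j'.succ := hN0 0 j'.succ
        nlinarith [mul_le_mul_of_nonneg_left hαw0 hN0j,
          mul_le_mul_of_nonneg_right hb hα_pos.le,
          mul_le_mul_of_nonneg_left hN00α (hG0 0 j'.succ)]
    · rcases Fin.eq_zero_or_eq_succ j with rfl | ⟨j', rfl⟩
      · -- (i'+1, 0)
        rw [if_neg (Fin.succ_ne_zero i'), if_neg (by
          intro hc
          exact Fin.succ_ne_zero i' (Fin.le_zero_iff.mp hc))]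
        rw [hWtri i'.succ 0 (Fin.succ_pos i'), zero_sub, abs_neg, abs_zero]
      · -- (i'+1, j'+1)
        have h := key' i' j'
        simp only [Matrix.submatrix_apply, hW1, hN1'] at h
        by_cases hij : i' = j'
        · subst hij
          simpa using h
        · have hsij : ¬ i'.succ = j'.succ := fun hc => hij (Fin.succ_inj.mp hc)
          by_cases hle : i' ≤ j'
          · have hsle : i'.succ ≤ j'.succ := Fin.succ_le_succ_iff.mpr hle
            simp only [if_neg hij, if_pos hle, if_neg hsij, if_pos hsle] at h ⊢
            simpa using h
          · have hsle : ¬ i'.succ ≤ j'.succ := fun hc => hle (Fin.succ_le_succ_iff.mp hc)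
            simp only [if_neg hij, if_neg hle, if_neg hsij, if_neg hsle] at h ⊢
            exact h


theorem stmt_11 {n : ℕ} (B Bt R Rt : Matrix (Fin n) (Fin n) ℝ)
    (hBsym : Bᵀ = B) (hBpos : ∀ x : Fin n → ℝ, x ≠ 0 → 0 < x ⬝ᵥ B.mulVec x)
    (hBtsym : Btᵀ = Bt) (hBtpos : ∀ x : Fin n → ℝ, x ≠ 0 → 0 < x ⬝ᵥ Bt.mulVec x)
    (hRtri : ∀ i j, j < i → R i j = 0) (hRdiag : ∀ i, 0 < R i i) (hchol : B = Rᵀ * R)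
    (hRttri : ∀ i j, j < i → Rt i j = 0) (hRtdiag : ∀ i, 0 < Rt i i) (hcholt : Bt = Rtᵀ * Rt)
    (E G : Matrix (Fin n) (Fin n) ℝ)
    (hE : E = Bt - B)
    (hG : G = matAbs ((Rt⁻¹)ᵀ * E * Rt⁻¹))
    (hρ : ∀ μ : ℂ, Module.End.HasEigenvalue (Matrix.toLin' (G.map Complex.ofReal)) μ → ‖μ‖ < 1) :
    ∀ i j, |Rt i j - R i j| ≤ (triu (G * (1 - G)⁻¹) * matAbs Rt) i j := by
  rcases Nat.eq_zero_or_pos n with hn | hn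
  · subst hn; intro i j; exact i.elim0
  -- basic data
  set F : Matrix (Fin n) (Fin n) ℝ := (Rt⁻¹)ᵀ * E * Rt⁻¹ with hF
  have hEsym : Eᵀ = E := by rw [hE, Matrix.transpose_sub, hBsym, hBtsym]
  have hFsym : Fᵀ = F := by
    rw [hF, Matrix.transpose_mul, Matrix.transpose_mul, Matrix.transpose_transpose, hEsym,
      Matrix.mul_assoc]
  have hFGentry : ∀ i j, |F i j| ≤ G i j := by
    intro i j; rw [hG]; exact le_of_eq rfl
  have hGsym : Gᵀ = G := by
    rw [hG]
    ext i j
    simp only [Matrix.transpose_apply, matAbs, Matrix.of_apply]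
    rw [show F j i = Fᵀ i j from rfl, hFsym]
  have hG0 : ∀ i j, 0 ≤ G i j := fun i j => le_trans (abs_nonneg _) (hFGentry i j)
  -- invertibility of Rt
  have hbt : Rt.BlockTriangular id := fun i j h => hRttri i j h
  have hdet : Rt.det ≠ 0 := by
    rw [Matrix.det_of_upperTriangular hbt]
    exact ne_of_gt (Finset.prod_pos fun i _ => hRtdiag i)
  haveI : Invertible Rt := Rt.invertibleOfIsUnitDet (isUnit_iff_ne_zero.2 hdet)
  have hRtRt : Rt * Rt⁻¹ = 1 := Matrix.mul_nonsing_inv _ (isUnit_iff_ne_zero.2 hdet)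
  have hRtRt' : Rt⁻¹ * Rt = 1 := Matrix.nonsing_inv_mul _ (isUnit_iff_ne_zero.2 hdet)
  have hinvbt : Rt⁻¹.BlockTriangular id := Matrix.blockTriangular_inv_of_blockTriangular hbt
  have hinvtri : ∀ i j : Fin n, j < i → Rt⁻¹ i j = 0 := fun i j h => hinvbt h
  -- W
  set W : Matrix (Fin n) (Fin n) ℝ := R * Rt⁻¹ with hW
  have hWtri : ∀ i j, j < i → W i j = 0 := by
    intro i j h
    rw [hW, Matrix.mul_apply]
    apply Finset.sum_eq_zero
    intro k _
    rcases le_or_gt k j with hk | hk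
    · rw [hRtri i k (lt_of_le_of_lt hk h)]; ring
    · rw [hinvtri k j hk]; ring
  have hdiaginv : ∀ i, Rt i i * Rt⁻¹ i i = 1 := by
    intro i
    have h : (Rt * Rt⁻¹) i i = 1 := by rw [hRtRt]; simp [Matrix.one_apply]
    rw [Matrix.mul_apply, Finset.sum_eq_single i] at h
    · exact h
    · intro k _ hk
      rcases lt_or_gt_of_ne hk with hlt | hgt
      · rw [hRttri i k hlt]; ring
      · rw [hinvtri k i hgt]; ring
    · simp
  have hWdiag : ∀ i, 0 < W i i := by
    intro i
    have h : W i i = R i i * Rt⁻¹ i i := by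
      rw [hW, Matrix.mul_apply, Finset.sum_eq_single i]
      · intro k _ hk
        rcases lt_or_gt_of_ne hk with hlt | hgt
        · rw [hRtri i k hlt]; ring
        · rw [hinvtri k i hgt]; ring
      · simp
    have hinvpos : 0 < Rt⁻¹ i i := by nlinarith [hdiaginv i, hRtdiag i]
    rw [h]
    exact mul_pos (hRdiag i) hinvpos
  -- W^T W = 1 - F
  have htr : (Rt⁻¹)ᵀ * Rtᵀ = 1 := by
    rw [← Matrix.transpose_mul, hRtRt, Matrix.transpose_one]
  have hWW : Wᵀ * W = 1 - F := by
    have hB : B = Rtᵀ * Rt - E := by rw [hE, hcholt]; abel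
    calc Wᵀ * W = (Rt⁻¹)ᵀ * (Rᵀ * R) * Rt⁻¹ := by
          rw [hW, Matrix.transpose_mul]
          simp only [Matrix.mul_assoc]
      _ = (Rt⁻¹)ᵀ * (Rtᵀ * Rt - E) * Rt⁻¹ := by rw [← hchol, ← hB]
      _ = (Rt⁻¹)ᵀ * (Rtᵀ * Rt) * Rt⁻¹ - F := by
          rw [hF, Matrix.mul_sub, Matrix.sub_mul]
      _ = ((Rt⁻¹)ᵀ * Rtᵀ) * (Rt * Rt⁻¹) - F := by simp only [Matrix.mul_assoc]
      _ = 1 - F := by rw [htr, hRtRt, Matrix.one_mul]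
  -- Neumann facts
  obtain ⟨hNa, hNb, hNpos⟩ := neumann G hGsym hG0 hρ hn
  set N : Matrix (Fin n) (Fin n) ℝ := (1 - G)⁻¹ with hN
  have hGNmat : G * N = N - 1 := by
    have h := hNa
    rw [Matrix.sub_mul, Matrix.one_mul] at h
    linear_combination (norm := abel) -h
  -- key estimate
  have hZ := key n F G W N hFsym hFGentry hNa hNb hNpos hWtri hWdiag hWW
  -- final assembly
  intro i j
  have hid : (1 - W) * Rt = Rt - R := by
    rw [Matrix.sub_mul, Matrix.one_mul, hW, Matrix.mul_assoc, hRtRt', Matrix.mul_one]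
  have hentry : Rt i j - R i j = ∑ k, ((if i = k then (1:ℝ) else 0) - W i k) * Rt k j := by
    have h := congrFun (congrFun hid i) j
    rw [Matrix.mul_apply] at h
    simp only [Matrix.sub_apply, Matrix.one_apply] at h
    rw [← h]
  rw [hentry]
  calc |∑ k, ((if i = k then (1:ℝ) else 0) - W i k) * Rt k j|
      ≤ ∑ k, |(if i = k then (1:ℝ) else 0) - W i k| * |Rt k j| := by
        refine le_trans (Finset.abs_sum_le_sum_abs _ _) ?_
        exact Finset.sum_le_sum fun k _ => le_of_eq (abs_mul _ _)
    _ ≤ ∑ k, (if i ≤ k then N i k - (if i = k then (1:ℝ) else 0) else 0) * |Rt k j| :=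
        Finset.sum_le_sum fun k _ => mul_le_mul_of_nonneg_right (hZ i k) (abs_nonneg _)
    _ = (triu (G * (1 - G)⁻¹) * matAbs Rt) i j := by
        rw [Matrix.mul_apply]
        refine Finset.sum_congr rfl fun k _ => ?_
        have h1 : (G * (1 - G)⁻¹) i k = N i k - (if i = k then (1:ℝ) else 0) := by
          rw [← hN, hGNmat]
          simp [Matrix.sub_apply, Matrix.one_apply]
        have h2 : matAbs Rt k j = |Rt k j| := rfl
        rw [h2]
        congr 1
        simp only [triu, Matrix.of_apply, h1]
end

section
/- Let A ∈ ℝ^{n×n}, R̃ ∈ ℝ^{n×n} upper triangular invertible, V ∈ ℝ^{n×n}, and W = R̃V with W invertible. Then componentwise |R̃^{-T} AᵀA R̃^{-1} − I| ≤ |W^{-T}|·(|VᵀAᵀAV − I| + |WᵀW − I|)·|W^{-1}|. -/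
open Matrix

theorem stmt_13 {n : ℕ} (A Rt V : Matrix (Fin n) (Fin n) ℝ)
    (hRttri : ∀ i j, j < i → Rt i j = 0) (hRtu : IsUnit Rt)
    (W : Matrix (Fin n) (Fin n) ℝ) (hW : W = Rt * V) (hWu : IsUnit W) :
    ∀ i j, |((Rt⁻¹)ᵀ * Aᵀ * A * Rt⁻¹ - 1) i j| ≤
      ((matAbs ((W⁻¹)ᵀ) *
        (matAbs (Vᵀ * Aᵀ * A * V - 1) + matAbs (Wᵀ * W - 1)) * matAbs (W⁻¹) :
          Matrix (Fin n) (Fin n) ℝ)) i j := by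
  have hRtdet : IsUnit Rt.det := (Matrix.isUnit_iff_isUnit_det Rt).mp hRtu
  have hWdet : IsUnit W.det := (Matrix.isUnit_iff_isUnit_det W).mp hWu
  have h2 : W * W⁻¹ = 1 := Matrix.mul_nonsing_inv W hWdet
  have h1 : (W⁻¹)ᵀ * Wᵀ = 1 := by rw [← Matrix.transpose_mul, h2, Matrix.transpose_one]
  have hV : V * W⁻¹ = Rt⁻¹ := by
    have : Rt⁻¹ * W = V := by rw [hW, ← Matrix.mul_assoc, Matrix.nonsing_inv_mul Rt hRtdet, Matrix.one_mul]
    rw [← this, Matrix.mul_assoc, h2, Matrix.mul_one]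
  have key : (Rt⁻¹)ᵀ * Aᵀ * A * Rt⁻¹ - 1
      = (W⁻¹)ᵀ * ((Vᵀ * Aᵀ * A * V - 1) - (Wᵀ * W - 1)) * W⁻¹ := by
    rw [← hV, Matrix.transpose_mul, sub_sub_sub_cancel_right, Matrix.mul_sub, Matrix.sub_mul]
    simp only [Matrix.mul_assoc, h2, Matrix.mul_one, h1]
  intro i j
  rw [key]
  set M1 := Vᵀ * Aᵀ * A * V - 1 with hM1
  set M2 := Wᵀ * W - 1 with hM2
  set B := (W⁻¹)ᵀ with hB
  set C := W⁻¹ with hC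
  simp only [Matrix.mul_apply, Matrix.sub_apply, Matrix.add_apply, matAbs, Matrix.of_apply]
  refine (Finset.abs_sum_le_sum_abs _ _).trans (Finset.sum_le_sum fun l _ => ?_)
  rw [abs_mul]
  refine mul_le_mul_of_nonneg_right ?_ (abs_nonneg _)
  refine (Finset.abs_sum_le_sum_abs _ _).trans (Finset.sum_le_sum fun k _ => ?_)
  rw [abs_mul]
  exact mul_le_mul_of_nonneg_left (abs_sub _ _) (abs_nonneg _)
end

section
/- Let R, R̃, F ∈ ℝ^{n×n} with R upper triangular with positive diagonal and |R̃ − R| ≤ F componentwise. Fix i and δ ∈ (1/4, 1]. Suppose tᵢ = r̃ᵢᵢ + fᵢᵢ > 0, that 0 ≤ |r̃_{i,i+1}| − f_{i,i+1}, that s = δ − ((|r̃_{i,i+1}| − f_{i,i+1})/tᵢ)² ≥ 0, and that √s · tᵢ ≤ r̃_{i+1,i+1} − f_{i+1,i+1}. Then the Lovász condition √(δ − (r_{i,i+1}/rᵢᵢ)²)·rᵢᵢ ≤ r_{i+1,i+1} holds (in particular δ − (r_{i,i+1}/rᵢᵢ)² ≥ 0 or the inequality holds trivially with the convention that δ − (r_{i,i+1}/rᵢᵢ)²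 ≤ s). -/
open Matrix

theorem stmt_17 {n : ℕ} (R Rt F : Matrix (Fin n) (Fin n) ℝ)
    (hRtri : ∀ i j, j < i → R i j = 0) (hRdiag : ∀ i, 0 < R i i)
    (hF : ∀ i j, |Rt i j - R i j| ≤ F i j)
    (δ : ℝ) (hδ : 1/4 < δ) (hδ1 : δ ≤ 1)
    (i j : Fin n) (hij : (j : ℕ) = (i : ℕ) + 1)
    (ht : 0 < Rt i i + F i i)
    (h0 : 0 ≤ |Rt i j| - F i j)
    (hs : 0 ≤ δ - ((|Rt i j| - F i j) / (Rt i i + F i i)) ^ 2)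
    (htest : Real.sqrt (δ - ((|Rt i j| - F i j) / (Rt i i + F i i)) ^ 2) * (Rt i i + F i i)
      ≤ Rt j j - F j j) :
    Real.sqrt (δ - (R i j / R i i) ^ 2) * R i i ≤ R j j := by
  have hRii : 0 < R i i := hRdiag i
  have hRt : R i i ≤ Rt i i + F i i := by
    have := abs_le.mp (hF i i)
    linarith [this.1]
  have hnum : |Rt i j| - F i j ≤ |R i j| := by
    have h1 : |Rt i j| ≤ |R i j| + |Rt i j - R i j| := by
      calc |Rt i j| = |R i j + (Rt i j - R i j)| := by ring_nf
        _ ≤ |R i j| + |Rt i j - R i j| := abs_add_le _ _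
    linarith [hF i j]
  have hdiv : (|Rt i j| - F i j) / (Rt i i + F i i) ≤ |R i j| / R i i :=
    div_le_div₀ (abs_nonneg _) hnum hRii hRt
  have hsq : ((|Rt i j| - F i j) / (Rt i i + F i i)) ^ 2 ≤ (R i j / R i i) ^ 2 := by
    have : (R i j / R i i) ^ 2 = (|R i j| / R i i) ^ 2 := by
      rw [div_pow, div_pow, sq_abs]
    rw [this]
    exact pow_le_pow_left₀ (div_nonneg h0 ht.le) hdiv 2
  have hsqrt : Real.sqrt (δ - (R i j / R i i) ^ 2)
      ≤ Real.sqrt (δ - ((|Rt i j| - F i j) / (Rt i i + F i i)) ^ 2) :=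
    Real.sqrt_le_sqrt (by linarith)
  have hRjj : Rt j j - F j j ≤ R j j := by
    have := abs_le.mp (hF j j)
    linarith [this.2]
  calc Real.sqrt (δ - (R i j / R i i) ^ 2) * R i i
      ≤ Real.sqrt (δ - ((|Rt i j| - F i j) / (Rt i i + F i i)) ^ 2) * (Rt i i + F i i) :=
        mul_le_mul hsqrt hRt hRii.le (Real.sqrt_nonneg _)
    _ ≤ Rt j j - F j j := htest
    _ ≤ R j j := hRjj
end
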